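/- On the unit circle with the Euclidean metric and normalized Lebesgue measure (so γ = 1), the operator 𝒫₀f(x,t) = (log(2/t))^{-1} ∫ f(y)/(|x-y|+t) dμ(y) is comparable to the normalized convolution with the square root of the Poisson kernel: there are constants c₁, c₂ > 0 such that for all f ≥ 0 in L¹ and all z with 1/2 < |z| < 1, c₁ 𝒫₀f(θ, 1-|z|) ≤ (P₀1(z))^{-1} ∫_{-π}^{π} (p(z,φ))^{1/2} f(φ) dφ ≤ c₂ 𝒫₀f(θ, 1-|z|), where θ = z/|z| and P₀1(z) = ∫_{-π}^π (p(z,φ))^{1/2} dφ. -/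

import Mathlib

open Real Complex MeasureTheory

/-- Poisson kernel on the unit disc. -/
noncomputable def poissonKer (z : ℂ) (θ : ℝ) : ℝ :=
  (1 / (2 * Real.pi)) * (1 - ‖z‖ ^ 2) / ‖z - Complex.exp (θ * Complex.I)‖ ^ 2

/-- The operator `𝒫₀f(θ,t)` on the unit circle, parametrized by the angle `θ`. -/
noncomputable def P0circ (f : ℝ → ℝ) (θ t : ℝ) : ℝ :=
  (Real.logb 2 (2 / t))⁻¹ *
    ∫ φ in (-Real.pi)..Real.pi,
      f φ / (‖Complex.exp (θ * Complex.I) - Complex.exp (φ * Complex.I)‖ + t)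

/-! Write `z = (1 - t) e^{iθ}`. Then `√p(z, φ) = √((1 - |z|²) / 2π) / |z - e^{iφ}|`, and since
`|z - e^{iθ}| = t ≤ |z - e^{iφ}|`, the triangle inequality makes `|z - e^{iφ}|` comparable, up to a
factor `3`, with `|e^{iθ} - e^{iφ}| + t`. Hence the normalised `√p`-average of `f` is comparable
with its normalised average against `(|e^{iθ} - e^{iφ}| + t)⁻¹`. The mass of that kernel is
`2 ∫₀^π (2 sin (ψ/2) + t)⁻¹ dψ`, which Jordan's inequality `2ψ/π ≤ 2 sin (ψ/2) ≤ ψ` compares with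
`∫₀^π (ψ + t)⁻¹ dψ = log ((π + t) / t) ≍ log (2 / t)`. -/

open intervalIntegral Set

noncomputable def chordKernel (θ t φ : ℝ) : ℝ :=
  (‖exp (θ * I) - exp (φ * I)‖ + t)⁻¹

theorem chordKernel_pos (θ : ℝ) {t : ℝ} (ht : 0 < t) (φ : ℝ) : 0 < chordKernel θ t φ := by
  unfold chordKernel
  positivity

theorem continuous_chordKernel (θ : ℝ) {t : ℝ} (ht : 0 < t) : Continuous (chordKernel θ t) :=
  (by fun_prop : Continuous fun φ : ℝ => ‖exp (θ * I) - exp (φ * I)‖ + t).inv₀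
    fun φ => by positivity

theorem P0circ_eq_logb_inv_mul_integral (f : ℝ → ℝ) (θ t : ℝ) :
    P0circ f θ t = (Real.logb 2 (2 / t))⁻¹ * ∫ φ in -π..π, chordKernel θ t φ * f φ := by
  rw [P0circ]
  congr 1
  exact integral_congr fun φ _ => div_eq_inv_mul _ _

theorem inv_integral_mul_integral_comparable {f g k : ℝ → ℝ} {a b A B : ℝ} (hab : a ≤ b)
    (hA : 0 < A) (hf : IntervalIntegrable f volume a b) (hf₀ : ∀ x ∈ Icc a b, 0 ≤ f x)
    (hg : ContinuousOn g (uIcc a b)) (hk : ContinuousOn k (uIcc a b))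
    (hg₀ : ∀ x ∈ Icc a b, 0 ≤ g x) (hG : 0 < ∫ x in a..b, g x)
    (hAk : ∀ x ∈ Icc a b, A * g x ≤ k x) (hkB : ∀ x ∈ Icc a b, k x ≤ B * g x) :
    A / B * ((∫ x in a..b, g x)⁻¹ * ∫ x in a..b, g x * f x) ≤
        (∫ x in a..b, k x)⁻¹ * ∫ x in a..b, k x * f x ∧
      (∫ x in a..b, k x)⁻¹ * ∫ x in a..b, k x * f x ≤
        B / A * ((∫ x in a..b, g x)⁻¹ * ∫ x in a..b, g x * f x) := by
  have hgf := hf.continuousOn_mul hg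
  have hkf := hf.continuousOn_mul hk
  have hK_ge : A * ∫ x in a..b, g x ≤ ∫ x in a..b, k x := by
    rw [← intervalIntegral.integral_const_mul]
    exact integral_mono_on hab (hg.intervalIntegrable.const_mul A) hk.intervalIntegrable hAk
  have hK_le : ∫ x in a..b, k x ≤ B * ∫ x in a..b, g x := by
    rw [← intervalIntegral.integral_const_mul]
    exact integral_mono_on hab hk.intervalIntegrable (hg.intervalIntegrable.const_mul B) hkB
  have hKf_ge : A * ∫ x in a..b, g x * f x ≤ ∫ x in a..b, k x * f x := by
    rw [← intervalIntegral.integral_const_mul]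
    refine integral_mono_on hab (hgf.const_mul A) hkf fun x hx => ?_
    rw [← mul_assoc]
    exact mul_le_mul_of_nonneg_right (hAk x hx) (hf₀ x hx)
  have hKf_le : ∫ x in a..b, k x * f x ≤ B * ∫ x in a..b, g x * f x := by
    rw [← intervalIntegral.integral_const_mul]
    refine integral_mono_on hab hkf (hgf.const_mul B) fun x hx => ?_
    rw [← mul_assoc]
    exact mul_le_mul_of_nonneg_right (hkB x hx) (hf₀ x hx)
  have hGf : 0 ≤ ∫ x in a..b, g x * f x :=
    integral_nonneg hab fun x hx => mul_nonneg (hg₀ x hx) (hf₀ x hx)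
  have hK : 0 < ∫ x in a..b, k x := (mul_pos hA hG).trans_le hK_ge
  have hB : 0 < B := pos_of_mul_pos_left (hK.trans_le hK_le) hG.le
  generalize ∫ x in a..b, g x = G at *
  generalize ∫ x in a..b, k x = K at *
  generalize ∫ x in a..b, g x * f x = Gf at *
  generalize ∫ x in a..b, k x * f x = Kf at *
  have hKf : 0 ≤ Kf := (mul_nonneg hA.le hGf).trans hKf_ge
  constructor
  · calc A / B * (G⁻¹ * Gf) = A * Gf / (B * G) := by field_simp
      _ ≤ A * Gf / K := div_le_div_of_nonneg_left (mul_nonneg hA.le hGf) hK hK_le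
      _ ≤ Kf / K := div_le_div_of_nonneg_right hKf_ge hK.le
      _ = K⁻¹ * Kf := div_eq_inv_mul _ _
  · calc K⁻¹ * Kf = Kf / K := (div_eq_inv_mul _ _).symm
      _ ≤ Kf / (A * G) := div_le_div_of_nonneg_left hKf (mul_pos hA hG) hK_ge
      _ ≤ B * Gf / (A * G) := div_le_div_of_nonneg_right hKf_le (mul_pos hA hG).le
      _ = B / A * (G⁻¹ * Gf) := by field_simp

theorem integral_neg_eq_two_mul_of_even {h : ℝ → ℝ} (hh : Continuous h)
    (h_even : ∀ x, h (-x) = h x) (a : ℝ) :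
    ∫ x in -a..a, h x = 2 * ∫ x in 0..a, h x := by
  have hneg : ∫ x in -a..0, h x = ∫ x in 0..a, h x := by
    simpa [h_even] using (integral_comp_neg (a := 0) (b := a) h).symm
  rw [← integral_add_adjacent_intervals (hh.intervalIntegrable (-a) 0)
    (hh.intervalIntegrable 0 a), hneg, two_mul]

theorem norm_exp_mul_I_sub_exp_add_mul_I (θ ψ : ℝ) :
    ‖exp (θ * I) - exp ((θ + ψ : ℝ) * I)‖ = 2 * |Real.sin (ψ / 2)| := by
  have : exp (θ * I) - exp ((θ + ψ : ℝ) * I) = -exp (θ * I) * (exp (I * ψ) - 1) := by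
    push_cast
    rw [add_mul, Complex.exp_add]
    ring_nf
  rw [this, norm_mul, norm_neg, norm_exp_ofReal_mul_I, one_mul, norm_exp_I_mul_ofReal_sub_one,
    Real.norm_eq_abs, abs_mul, abs_two]

theorem integral_exp_mul_I_comp_add_left (g : ℂ → ℝ) (θ : ℝ) :
    ∫ φ in -π..π, g (exp (φ * I)) = ∫ ψ in -π..π, g (exp ((θ + ψ : ℝ) * I)) := by
  have hper : Function.Periodic (fun φ : ℝ => g (exp (φ * I))) (2 * π) := fun φ => by
    simp only [ofReal_add, ofReal_mul, add_mul, Complex.exp_add, ofReal_ofNat, exp_two_pi_mul_I,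
      mul_one]
  rw [integral_comp_add_left (fun φ => g (exp (φ * I))) θ,
    show θ + π = θ + -π + 2 * π by ring, hper.intervalIntegral_add_eq (θ + -π) (-π)]
  ring_nf

theorem integral_inv_two_mul_abs_sin_half_add_bounds {t : ℝ} (ht : 0 < t) :
    Real.log ((π + t) / t) ≤ ∫ ψ in 0..π, (2 * |Real.sin (ψ / 2)| + t)⁻¹ ∧
      ∫ ψ in 0..π, (2 * |Real.sin (ψ / 2)| + t)⁻¹ ≤ π / 2 * Real.log ((π + t) / t) := by
  have hlog : ∫ ψ in 0..π, (ψ + t)⁻¹ = Real.log ((π + t) / t) := by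
    rw [integral_comp_add_right (fun x => x⁻¹), zero_add,
      integral_inv_of_pos ht (by positivity)]
  have hsin : Continuous fun ψ : ℝ => (2 * |Real.sin (ψ / 2)| + t)⁻¹ :=
    (by fun_prop : Continuous fun ψ : ℝ => 2 * |Real.sin (ψ / 2)| + t).inv₀
      fun ψ => by positivity
  have hlin : IntervalIntegrable (fun ψ : ℝ => (ψ + t)⁻¹) volume 0 π := by
    refine ContinuousOn.intervalIntegrable fun ψ hψ => ?_
    rw [uIcc_of_le pi_pos.le] at hψ
    exact ((continuous_add_const t).continuousAt.inv₀ (by linarith [hψ.1])).continuousWithinAt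
  have hjordan : ∀ ψ ∈ Icc 0 π,
      2 / π * ψ ≤ 2 * |Real.sin (ψ / 2)| ∧ 2 * |Real.sin (ψ / 2)| ≤ ψ := by
    rintro ψ ⟨hψ₀, hψπ⟩
    have habs : |ψ / 2| = ψ / 2 := abs_of_nonneg (by linarith)
    have hle := Real.mul_abs_le_abs_sin (x := ψ / 2) (by rw [habs]; linarith)
    have hge := Real.abs_sin_le_abs (x := ψ / 2)
    rw [habs] at hle hge
    constructor <;> linarith
  constructor
  · rw [← hlog]
    refine integral_mono_on pi_pos.le hlin (hsin.intervalIntegrable _ _) fun ψ hψ => ?_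
    exact inv_anti₀ (by positivity) (by linarith [(hjordan ψ hψ).2])
  · rw [← hlog, ← intervalIntegral.integral_const_mul]
    refine integral_mono_on pi_pos.le (hsin.intervalIntegrable _ _) (hlin.const_mul _)
      fun ψ hψ => ?_
    have hπ : 2 / π * t ≤ t := by
      rw [div_mul_eq_mul_div, div_le_iff₀ pi_pos]
      nlinarith [two_le_pi]
    calc (2 * |Real.sin (ψ / 2)| + t)⁻¹ ≤ (2 / π * (ψ + t))⁻¹ :=
          inv_anti₀ (by positivity [hψ.1]) (by linarith [(hjordan ψ hψ).1])
      _ = π / 2 * (ψ + t)⁻¹ := by rw [mul_inv, inv_div]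

theorem integral_chordKernel_bounds (θ : ℝ) {t : ℝ} (ht₀ : 0 < t) (ht : t ≤ 1 / 2) :
    2 * Real.log (2 / t) ≤ ∫ φ in -π..π, chordKernel θ t φ ∧
      ∫ φ in -π..π, chordKernel θ t φ ≤ 2 * π * Real.log (2 / t) := by
  have hsym : ∫ φ in -π..π, chordKernel θ t φ =
      2 * ∫ ψ in 0..π, (2 * |Real.sin (ψ / 2)| + t)⁻¹ := by
    refine (integral_exp_mul_I_comp_add_left (fun w => (‖exp (θ * I) - w‖ + t)⁻¹) θ).trans ?_
    simp only [norm_exp_mul_I_sub_exp_add_mul_I]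
    refine integral_neg_eq_two_mul_of_even ?_ (fun ψ => by simp [neg_div]) π
    exact (by fun_prop : Continuous fun ψ : ℝ => 2 * |Real.sin (ψ / 2)| + t).inv₀
      fun ψ => by positivity
  have hlog_ge : Real.log (2 / t) ≤ Real.log ((π + t) / t) :=
    Real.log_le_log (by positivity) (by gcongr; linarith [two_le_pi])
  have hlog_le : Real.log ((π + t) / t) ≤ 2 * Real.log (2 / t) := by
    rw [show 2 * Real.log (2 / t) = Real.log ((2 / t) ^ 2) by rw [Real.log_pow]; norm_num]
    refine Real.log_le_log (by positivity) ?_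
    rw [div_pow, div_le_div_iff₀ ht₀ (by positivity)]
    nlinarith [pi_le_four]
  obtain ⟨hJ_ge, hJ_le⟩ := integral_inv_two_mul_abs_sin_half_add_bounds ht₀
  rw [hsym]
  constructor
  · linarith
  · nlinarith [mul_le_mul_of_nonneg_left hlog_le pi_pos.le]

theorem norm_sub_exp_arg_mul_I {z : ℂ} (hz : ‖z‖ ≤ 1) : ‖z - exp (arg z * I)‖ = 1 - ‖z‖ := by
  have h : z - exp (arg z * I) = ((‖z‖ - 1 : ℝ) : ℂ) * exp (arg z * I) := by
    conv_lhs => arg 1; rw [← norm_mul_exp_arg_mul_I z]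
    push_cast
    ring
  rw [h, norm_mul, norm_exp_ofReal_mul_I, mul_one, norm_real, Real.norm_eq_abs,
    abs_of_nonpos (by linarith), neg_sub]

theorem one_sub_norm_le_norm_sub_exp_mul_I (z : ℂ) (φ : ℝ) : 1 - ‖z‖ ≤ ‖z - exp (φ * I)‖ := by
  simpa [norm_exp_ofReal_mul_I, norm_sub_rev] using norm_sub_norm_le (exp (φ * I)) z

theorem norm_sub_exp_mul_I_comparable {z : ℂ} (hz : ‖z‖ ≤ 1) (φ : ℝ) :
    ‖z - exp (φ * I)‖ ≤ ‖exp (arg z * I) - exp (φ * I)‖ + (1 - ‖z‖) ∧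
      ‖exp (arg z * I) - exp (φ * I)‖ + (1 - ‖z‖) ≤ 3 * ‖z - exp (φ * I)‖ := by
  have hw := norm_sub_exp_arg_mul_I hz
  have hζ := one_sub_norm_le_norm_sub_exp_mul_I z φ
  constructor
  · linarith [norm_sub_le_norm_sub_add_norm_sub z (exp (arg z * I)) (exp (φ * I))]
  · linarith [norm_sub_le_norm_sub_add_norm_sub (exp (arg z * I)) z (exp (φ * I)),
      norm_sub_rev z (exp (arg z * I))]

theorem poissonKer_rpow_half (z : ℂ) (φ : ℝ) :
    poissonKer z φ ^ ((1 : ℝ) / 2) = √((1 - ‖z‖ ^ 2) / (2 * π)) / ‖z - exp (φ * I)‖ := by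
  rw [← Real.sqrt_eq_rpow, poissonKer, one_div_mul_eq_div,
    Real.sqrt_div' _ (sq_nonneg _), Real.sqrt_sq (norm_nonneg _)]

theorem rpow_half_poissonKer_comparable_chordKernel {z : ℂ} (hz : ‖z‖ < 1) (φ : ℝ) :
    √((1 - ‖z‖ ^ 2) / (2 * π)) * chordKernel (arg z) (1 - ‖z‖) φ ≤
        poissonKer z φ ^ ((1 : ℝ) / 2) ∧
      poissonKer z φ ^ ((1 : ℝ) / 2) ≤
        3 * √((1 - ‖z‖ ^ 2) / (2 * π)) * chordKernel (arg z) (1 - ‖z‖) φ := by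
  have hD : 0 < ‖z - exp (φ * I)‖ :=
    (sub_pos.2 hz).trans_le (one_sub_norm_le_norm_sub_exp_mul_I z φ)
  obtain ⟨hD_le, hD_ge⟩ := norm_sub_exp_mul_I_comparable hz.le φ
  have hs := Real.sqrt_nonneg ((1 - ‖z‖ ^ 2) / (2 * π))
  rw [poissonKer_rpow_half, chordKernel]
  constructor
  · rw [← div_eq_mul_inv]
    exact div_le_div_of_nonneg_left hs hD hD_le
  · calc _ ≤ √((1 - ‖z‖ ^ 2) / (2 * π)) /
          ((‖exp (arg z * I) - exp (φ * I)‖ + (1 - ‖z‖)) / 3) :=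
          div_le_div_of_nonneg_left hs (by linarith) (by linarith)
      _ = _ := by field_simp

theorem sqrt_poissonKer_average_comparable {f : ℝ → ℝ} (hf : ∀ φ, 0 ≤ f φ)
    (hf_int : IntervalIntegrable f volume (-π) π) {z : ℂ} (hz : ‖z‖ < 1) :
    3⁻¹ * ((∫ φ in -π..π, chordKernel (arg z) (1 - ‖z‖) φ)⁻¹ *
        ∫ φ in -π..π, chordKernel (arg z) (1 - ‖z‖) φ * f φ) ≤
        (∫ φ in -π..π, poissonKer z φ ^ ((1 : ℝ) / 2))⁻¹ *
          ∫ φ in -π..π, poissonKer z φ ^ ((1 : ℝ) / 2) * f φ ∧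
      (∫ φ in -π..π, poissonKer z φ ^ ((1 : ℝ) / 2))⁻¹ *
          ∫ φ in -π..π, poissonKer z φ ^ ((1 : ℝ) / 2) * f φ ≤
        3 * ((∫ φ in -π..π, chordKernel (arg z) (1 - ‖z‖) φ)⁻¹ *
          ∫ φ in -π..π, chordKernel (arg z) (1 - ‖z‖) φ * f φ) := by
  have ht : 0 < 1 - ‖z‖ := sub_pos.2 hz
  have hs : 0 < √((1 - ‖z‖ ^ 2) / (2 * π)) :=
    Real.sqrt_pos.2 (div_pos (by nlinarith [norm_nonneg z]) (by positivity))
  have hk : Continuous fun φ : ℝ => poissonKer z φ ^ ((1 : ℝ) / 2) := by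
    simp only [poissonKer_rpow_half]
    exact continuous_const.div (by fun_prop) fun φ =>
      (ht.trans_le (one_sub_norm_le_norm_sub_exp_mul_I z φ)).ne'
  have hg := continuous_chordKernel (arg z) ht
  have h := inv_integral_mul_integral_comparable (by linarith [pi_pos]) hs hf_int
    (fun φ _ => hf φ) hg.continuousOn hk.continuousOn
    (fun φ _ => (chordKernel_pos _ ht φ).le)
    (intervalIntegral_pos_of_pos (hg.intervalIntegrable _ _) (chordKernel_pos _ ht)
      (by linarith [pi_pos]))
    (fun φ _ => (rpow_half_poissonKer_comparable_chordKernel hz φ).1)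
    (fun φ _ => (rpow_half_poissonKer_comparable_chordKernel hz φ).2)
  rwa [div_mul_cancel_right₀ hs.ne', mul_div_cancel_right₀ _ hs.ne'] at h

/-- On the unit circle the normalized convolution with the square root of the Poisson
kernel is comparable with `𝒫₀f(θ, 1-|z|)`, where `θ = arg z`. -/
theorem P0_comparable_to_sqrt_poisson :
    ∃ c₁ c₂ : ℝ, 0 < c₁ ∧ 0 < c₂ ∧
      ∀ f : ℝ → ℝ, (∀ φ, 0 ≤ f φ) →
        IntervalIntegrable f MeasureTheory.volume (-Real.pi) Real.pi →
        ∀ z : ℂ, 1 / 2 < ‖z‖ → ‖z‖ < 1 →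
          c₁ * P0circ f (Complex.arg z) (1 - ‖z‖) ≤
            (∫ φ in (-Real.pi)..Real.pi, (poissonKer z φ) ^ ((1 : ℝ) / 2))⁻¹ *
              ∫ φ in (-Real.pi)..Real.pi, (poissonKer z φ) ^ ((1 : ℝ) / 2) * f φ ∧
          (∫ φ in (-Real.pi)..Real.pi, (poissonKer z φ) ^ ((1 : ℝ) / 2))⁻¹ *
              (∫ φ in (-Real.pi)..Real.pi, (poissonKer z φ) ^ ((1 : ℝ) / 2) * f φ) ≤
            c₂ * P0circ f (Complex.arg z) (1 - ‖z‖) := by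
  refine ⟨(3 * (2 * π * Real.log 2))⁻¹, 3 * (2 * Real.log 2)⁻¹, by positivity, by positivity,
    fun f hf hf_int z hz_half hz_one => ?_⟩
  obtain ⟨h_ge, h_le⟩ := sqrt_poissonKer_average_comparable hf hf_int hz_one
  set t := 1 - ‖z‖
  have ht : 0 < t := sub_pos.2 hz_one
  have hlog : 0 < Real.log (2 / t) := Real.log_pos (by rw [lt_div_iff₀ ht]; linarith)
  obtain ⟨hM_ge, hM_le⟩ := integral_chordKernel_bounds (arg z) ht (by linarith)
  have hJ : 0 ≤ ∫ φ in -π..π, chordKernel (arg z) t φ * f φ :=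
    integral_nonneg (by linarith [pi_pos]) fun φ _ => mul_nonneg (chordKernel_pos _ ht φ).le (hf φ)
  rw [P0circ_eq_logb_inv_mul_integral, Real.logb, inv_div]
  generalize ∫ φ in -π..π, chordKernel (arg z) t φ = M at *
  generalize ∫ φ in -π..π, chordKernel (arg z) t φ * f φ = J at *
  constructor
  · calc (3 * (2 * π * Real.log 2))⁻¹ * (Real.log 2 / Real.log (2 / t) * J)
          = (3 * (2 * π * Real.log (2 / t)))⁻¹ * J := by field_simp
      _ ≤ (3 * M)⁻¹ * J :=
          mul_le_mul_of_nonneg_right (inv_anti₀ (by linarith) (by linarith)) hJ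
      _ = _ := by ring
      _ ≤ _ := h_ge
  · calc _ ≤ _ := h_le
      _ ≤ 3 * ((2 * Real.log (2 / t))⁻¹ * J) := by gcongr
      _ = 3 * (2 * Real.log 2)⁻¹ * (Real.log 2 / Real.log (2 / t) * J) := by field_simp
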